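/- Let K be a kernel, let d_0, …, d_m be real numbers with m ≥ 1 and associated δ_s, and let ℓ ≥ 1 and h ≥ 1 be integers. Then for every function g : ℤ → ℝ, the reindexing identity Σ_{k=−(ℓ+mh)}^{ℓ+mh} K_diff(k/ℓ) g(k) = Σ_{s=−m}^{m} δ_{|s|} Σ_{k=−(ℓ−1)}^{ℓ−1} K(k/ℓ) g(k − hs) holds. -/

import Mathlib

/-- `δ_s = ∑_{j=|s|}^m d_j d_{j-|s|}` for `|s| ≤ m`, and `δ_s = 0` for `|s| > m`. -/
noncomputable def delta (d : ℕ → ℝ) (m : ℕ) (s : ℤ) : ℝ :=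
  if s.natAbs ≤ m then ∑ j ∈ Finset.Icc s.natAbs m, d j * d (j - s.natAbs) else 0

/-- The differencing kernel
`K_diff(t) = ∑_{s=⌈-(1+t)/λ⌉}^{⌊(1-t)/λ⌋} δ_{|s|} K(t + λ s)` with `λ = h/ℓ`. -/
noncomputable def Kdiff (K : ℝ → ℝ) (d : ℕ → ℝ) (m ℓ h : ℕ) (t : ℝ) : ℝ :=
  ∑ s ∈ Finset.Icc ⌈(-(1 + t)) / ((h : ℝ) / (ℓ : ℝ))⌉ ⌊(1 - t) / ((h : ℝ) / (ℓ : ℝ))⌋,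
    delta d m |s| * K (t + ((h : ℝ) / (ℓ : ℝ)) * (s : ℝ))

/-!
Writing `λ = h/ℓ`, the summation range of `K_diff(t)` is exactly the set of `s` with
`|t + λ s| ≤ 1`, outside of which `K(t + λ s)` vanishes anyway, while `δ_{|s|}` vanishes for
`|s| > m`; so `K_diff(k/ℓ) = ∑_{|s| ≤ m} δ_{|s|} K((k + h s)/ℓ)`. After exchanging the two sums,
the substitution `k ↦ k - h s` turns each inner sum into a sum over the support
`|k| < ℓ` of `k ↦ K(k/ℓ)`, which lies inside the shifted range because `|h s| ≤ m h`.
-/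

open Finset

lemma delta_eq_zero_of_lt_natAbs (d : ℕ → ℝ) {m : ℕ} {s : ℤ} (hs : m < s.natAbs) :
    delta d m s = 0 :=
  if_neg hs.not_ge

lemma mem_Icc_ceil_floor_iff {lam t : ℝ} (hlam : 0 < lam) (s : ℤ) :
    s ∈ Icc ⌈-(1 + t) / lam⌉ ⌊(1 - t) / lam⌋ ↔ |t + lam * s| ≤ 1 := by
  rw [mem_Icc, Int.ceil_le, Int.le_floor, div_le_iff₀ hlam, le_div_iff₀ hlam, abs_le]
  constructor <;> rintro ⟨_, _⟩ <;> constructor <;> linarith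

lemma Kdiff_eq_sum_Icc (K : ℝ → ℝ) (d : ℕ → ℝ) (hK : ∀ t : ℝ, 1 ≤ |t| → K t = 0)
    {m ℓ h : ℕ} (hℓ : 0 < ℓ) (hh : 0 < h) (t : ℝ) :
    Kdiff K d m ℓ h t
      = ∑ s ∈ Icc (-(m : ℤ)) m, delta d m |s| * K (t + ((h : ℝ) / ℓ) * s) := by
  have hlam : (0 : ℝ) < (h : ℝ) / ℓ := by positivity
  refine sum_congr_of_eq_on_inter ?_ ?_ fun _ _ _ ↦ rfl
  · intro s _ hs
    rw [delta_eq_zero_of_lt_natAbs d (by rw [mem_Icc] at hs; rw [Int.natAbs_abs]; omega),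
      zero_mul]
  · intro s _ hs
    rw [mem_Icc_ceil_floor_iff hlam] at hs
    rw [hK _ (not_le.1 hs).le, mul_zero]

lemma apply_intCast_div_eq_zero (K : ℝ → ℝ) (hK : ∀ t : ℝ, 1 ≤ |t| → K t = 0)
    {ℓ : ℕ} (hℓ : 0 < ℓ) {j : ℤ} (hj : (ℓ : ℤ) ≤ |j|) : K ((j : ℝ) / ℓ) = 0 := by
  have hℓ' : (0 : ℝ) < ℓ := by exact_mod_cast hℓ
  apply hK
  rw [abs_div, abs_of_pos hℓ', le_div_iff₀ hℓ', one_mul, ← Int.cast_abs]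
  exact_mod_cast hj

lemma sum_Icc_shift_eq_of_support {R : Type*} [Semiring R] (f g : ℤ → R) {L N c : ℤ}
    (hf : ∀ j, L ≤ |j| → f j = 0) (hc : |c| + L ≤ N + 1) :
    ∑ k ∈ Icc (-N) N, f (k + c) * g k = ∑ j ∈ Icc (-L + 1) (L - 1), f j * g (j - c) := by
  have hshift : ∑ k ∈ Icc (-N) N, f (k + c) * g k
      = ∑ j ∈ Icc (-N + c) (N + c), f j * g (j - c) := by
    rw [← map_add_right_Icc, sum_map]
    simp only [addRightEmbedding_apply, add_sub_cancel_right]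
  rw [hshift]
  refine sum_congr_of_eq_on_inter ?_ ?_ fun _ _ _ ↦ rfl
  · intro j _ hj
    rw [hf j (by rw [mem_Icc] at hj; rw [le_abs]; omega), zero_mul]
  · intro j hj hj'
    rw [mem_Icc] at hj hj'
    have hc₁ := le_abs_self c
    have hc₂ := neg_abs_le c
    omega

theorem stmt5_general (K : ℝ → ℝ)
    (hKsupp : ∀ t : ℝ, 1 ≤ |t| → K t = 0)
    (m : ℕ) (d : ℕ → ℝ)
    (ℓ h : ℕ) (hℓ : 1 ≤ ℓ) (hh : 1 ≤ h) :
    ∀ g : ℤ → ℝ,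
      ∑ k ∈ Finset.Icc (-(ℓ + m * h : ℤ)) ((ℓ + m * h : ℕ) : ℤ),
          Kdiff K d m ℓ h ((k : ℝ) / (ℓ : ℝ)) * g k
        = ∑ s ∈ Finset.Icc (-(m : ℤ)) (m : ℤ), delta d m |s| *
            ∑ k ∈ Finset.Icc (-(ℓ : ℤ) + 1) ((ℓ : ℤ) - 1),
              K ((k : ℝ) / (ℓ : ℝ)) * g (k - (h : ℤ) * s) := by
  intro g
  push_cast
  calc _ = ∑ k ∈ Icc (-(ℓ + m * h : ℤ)) (ℓ + m * h), ∑ s ∈ Icc (-(m : ℤ)) m,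
          delta d m |s| * (K (((k + h * s : ℤ) : ℝ) / ℓ) * g k) := by
        refine sum_congr rfl fun k _ ↦ ?_
        rw [Kdiff_eq_sum_Icc K d hKsupp hℓ hh, sum_mul]
        refine sum_congr rfl fun s _ ↦ ?_
        rw [show (k : ℝ) / ℓ + h / ℓ * s = ((k + h * s : ℤ) : ℝ) / ℓ by push_cast; ring,
          mul_assoc]
    _ = _ := by
        rw [sum_comm]
        refine sum_congr rfl fun s hs ↦ ?_
        rw [← mul_sum, sum_Icc_shift_eq_of_support (fun j : ℤ ↦ K (j / ℓ)) g
          (fun j ↦ apply_intCast_div_eq_zero K hKsupp hℓ)]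
        have hsm : |s| ≤ m := abs_le.2 (mem_Icc.1 hs)
        rw [abs_mul, Nat.abs_cast]
        nlinarith

/-- For a kernel `K`, real numbers `d_0, …, d_m` with `m ≥ 1` and associated
`δ_s`, and integers `ℓ, h ≥ 1`, for every `g : ℤ → ℝ` the reindexing identity
`∑_{k=-(ℓ+mh)}^{ℓ+mh} K_diff(k/ℓ) g(k)
  = ∑_{s=-m}^{m} δ_{|s|} ∑_{k=-(ℓ-1)}^{ℓ-1} K(k/ℓ) g(k - hs)` holds. -/
theorem stmt5 (K : ℝ → ℝ) (hK0 : K 0 = 1) (hKsymm : ∀ t, K (-t) = K t)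
    (hKsupp : ∀ t : ℝ, 1 ≤ |t| → K t = 0)
    (m : ℕ) (hm : 1 ≤ m) (d : ℕ → ℝ)
    (ℓ h : ℕ) (hℓ : 1 ≤ ℓ) (hh : 1 ≤ h) :
    ∀ g : ℤ → ℝ,
      ∑ k ∈ Finset.Icc (-(ℓ + m * h : ℤ)) ((ℓ + m * h : ℕ) : ℤ),
          Kdiff K d m ℓ h ((k : ℝ) / (ℓ : ℝ)) * g k
        = ∑ s ∈ Finset.Icc (-(m : ℤ)) (m : ℤ), delta d m |s| *
            ∑ k ∈ Finset.Icc (-(ℓ : ℤ) + 1) ((ℓ : ℤ) - 1),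
              K ((k : ℝ) / (ℓ : ℝ)) * g (k - (h : ℤ) * s) :=
  stmt5_general K hKsupp m d ℓ h hℓ hh
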